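/- arXiv:2104.00647 — 5 statements merged into one kernel-verified Lean document; each statement's English description precedes it below -/
import Mathlib

section
/- Let d ∈ ℕ and let B : Fin d × Fin d × Fin d → ℝ satisfy B_{ijk} = −B_{kji} for all i, j, k. Then for every initial condition y₀ ∈ ℝ^d there exists a unique differentiable y : ℝ → ℝ^d, defined for all time, with y(0) = y₀ and y_i'(t) = Σ_{j,k} B_{ijk} y_j(t) y_k(t) for all t and all i. -/
/-!
Antisymmetry of `B` makes the field `f(y)ᵢ = Σⱼₖ Bᵢⱼₖ yⱼ yₖ` orthogonal to `y`, so `y ⬝ᵥ y` is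
conserved along solutions. Multiplying `f` by a smooth cutoff of `y ⬝ᵥ y` gives a `C¹` field with
compact support, hence globally Lipschitz and bounded, which is still orthogonal to `y`. Picard–Lindelöf
on `[-n, n]`, glued by uniqueness, gives a global solution of the cutoff equation; it stays on the
sphere through `y₀`, where the cutoff field is `f`. Conversely every solution of `y' = f(y)` stays on
that sphere, so solves the globally Lipschitz cutoff equation, whose solutions are unique.
-/

open Finset Set
open scoped NNReal Topology

section GlobalExistence

variable {E : Type*} [NormedAddCommGroup E] [NormedSpace ℝ E] {v : E → E} {K : ℝ≥0}

theorem exists_isIntegralCurve_of_forall_abs_lt (hv : LipschitzWith K v) {x₀ : E}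
    (γ : ℕ → ℝ → E) (hγ₀ : ∀ n, γ n 0 = x₀)
    (hγ : ∀ (n : ℕ) (t : ℝ), |t| < n → HasDerivAt (γ n) (v (γ n t)) t) :
    ∃ γ : ℝ → E, γ 0 = x₀ ∧ IsIntegralCurve γ fun _ ↦ v := by
  have agree : ∀ (m n : ℕ) (t : ℝ), |t| < m → |t| < n → γ m t = γ n t := by
    intro m n t hm hn
    set c : ℝ := min (m : ℝ) n
    have hc : |t| < c := lt_min hm hn
    have hm : ∀ s ∈ Ioo (-c) c, |s| < m := fun s hs ↦ (abs_lt.2 hs).trans_le (min_le_left _ _)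
    have hn : ∀ s ∈ Ioo (-c) c, |s| < n := fun s hs ↦ (abs_lt.2 hs).trans_le (min_le_right _ _)
    exact ODE_solution_unique_of_mem_Ioo (s := fun _ ↦ Set.univ) (fun _ _ ↦ hv.lipschitzOnWith)
      (t₀ := 0) (by simpa using (abs_nonneg t).trans_lt hc)
      (fun s hs ↦ ⟨hγ m s (hm s hs), trivial⟩) (fun s hs ↦ ⟨hγ n s (hn s hs), trivial⟩)
      (by rw [hγ₀, hγ₀]) (abs_lt.1 hc)
  refine ⟨fun t ↦ γ (⌊|t|⌋₊ + 1) t, by simpa using hγ₀ 1, fun t ↦ ?_⟩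
  have hlt : ∀ s : ℝ, |s| < (⌊|s|⌋₊ + 1 : ℕ) := fun s ↦ by
    push_cast; exact Nat.lt_floor_add_one _
  have heq : (fun s ↦ γ (⌊|s|⌋₊ + 1) s) =ᶠ[𝓝 t] γ (⌊|t|⌋₊ + 1) := by
    filter_upwards [(isOpen_lt continuous_abs continuous_const).mem_nhds (hlt t)] with s hs
    exact agree _ _ s (hlt s) hs
  exact (hγ _ t (hlt t)).congr_of_eventuallyEq heq

theorem exists_isIntegralCurve_of_lipschitzWith_of_norm_le [CompleteSpace E]
    (hv : LipschitzWith K v) {C : ℝ≥0} (hC : ∀ x, ‖v x‖ ≤ C) (x₀ : E) :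
    ∃ γ : ℝ → E, γ 0 = x₀ ∧ IsIntegralCurve γ fun _ ↦ v := by
  have local_solution : ∀ n : ℕ, ∃ γ : ℝ → E, γ 0 = x₀ ∧
      ∀ t : ℝ, |t| < n → HasDerivAt γ (v (γ t)) t := by
    intro n
    have h0 : (0 : ℝ) ∈ Icc (-n : ℝ) n := by simp
    have hPL : IsPicardLindelof (fun _ ↦ v) (⟨0, h0⟩ : Icc (-n : ℝ) n) x₀ (C * n) 0 C K :=
      { lipschitzOnWith := fun _ _ ↦ hv.lipschitzOnWith
        continuousOn := fun _ _ ↦ continuousOn_const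
        norm_le := fun _ _ x _ ↦ hC x
        mul_max_le := by simp }
    obtain ⟨γ, hγ₀, hγ⟩ := hPL.exists_eq_forall_mem_Icc_hasDerivWithinAt₀
    refine ⟨γ, hγ₀, fun t ht ↦ ?_⟩
    obtain ⟨h₁, h₂⟩ := abs_lt.1 ht
    exact (hγ t ⟨h₁.le, h₂.le⟩).hasDerivAt (Icc_mem_nhds h₁ h₂)
  choose γ hγ₀ hγ using local_solution
  exact exists_isIntegralCurve_of_forall_abs_lt hv γ hγ₀ hγ

end GlobalExistence

section DotProduct

variable {ι : Type*} [Fintype ι]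

theorem norm_le_sqrt_dotProduct_self (x : ι → ℝ) : ‖x‖ ≤ √(x ⬝ᵥ x) :=
  (pi_norm_le_iff_of_nonneg (Real.sqrt_nonneg _)).2 fun i ↦ Real.abs_le_sqrt <| by
    rw [sq]
    exact single_le_sum (f := fun j ↦ x j * x j) (fun j _ ↦ mul_self_nonneg (x j)) (mem_univ i)

theorem HasDerivAt.dotProduct_self {u : ℝ → ι → ℝ} {u' : ι → ℝ} {t : ℝ}
    (hu : HasDerivAt u u' t) : HasDerivAt (fun s ↦ u s ⬝ᵥ u s) (2 * (u t ⬝ᵥ u')) t := by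
  simp only [dotProduct, mul_sum]
  exact (HasDerivAt.fun_sum fun i _ ↦ (hasDerivAt_pi.1 hu i).fun_mul (hasDerivAt_pi.1 hu i))
    |>.congr_deriv (sum_congr rfl fun i _ ↦ by ring)

theorem dotProduct_self_eq_of_isIntegralCurve {v : (ι → ℝ) → ι → ℝ}
    (hv : ∀ x, x ⬝ᵥ v x = 0) {γ : ℝ → ι → ℝ} (hγ : IsIntegralCurve γ fun _ ↦ v) (t : ℝ) :
    γ t ⬝ᵥ γ t = γ 0 ⬝ᵥ γ 0 := by
  have hderiv : ∀ s, HasDerivAt (fun s ↦ γ s ⬝ᵥ γ s) 0 s := fun s ↦ by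
    simpa only [hv, mul_zero] using (hγ s).dotProduct_self
  exact is_const_of_deriv_eq_zero (fun s ↦ (hderiv s).differentiableAt)
    (fun s ↦ (hderiv s).deriv) t 0

end DotProduct

section Cutoff

variable {ι : Type*} [Fintype ι]

noncomputable def cutoffField (b : ℝ) (v : (ι → ℝ) → ι → ℝ) (x : ι → ℝ) : ι → ℝ :=
  Real.smoothTransition (b - x ⬝ᵥ x) • v x

variable {b : ℝ} {v : (ι → ℝ) → ι → ℝ}

theorem cutoffField_eq_of_dotProduct_self_le {x : ι → ℝ} (hx : x ⬝ᵥ x ≤ b - 1) :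
    cutoffField b v x = v x := by
  rw [cutoffField, Real.smoothTransition.one_of_one_le (by linarith), one_smul]

theorem dotProduct_cutoffField_eq_zero (hv : ∀ x, x ⬝ᵥ v x = 0) (x : ι → ℝ) :
    x ⬝ᵥ cutoffField b v x = 0 := by
  rw [cutoffField, dotProduct_smul, hv, smul_zero]

theorem ContDiff.cutoffField {n : ℕ∞} (hv : ContDiff ℝ n v) : ContDiff ℝ n (cutoffField b v) := by
  have hsq : ContDiff ℝ n fun x : ι → ℝ ↦ x ⬝ᵥ x := by simp only [dotProduct]; fun_prop
  exact (Real.smoothTransition.contDiff.comp (contDiff_const.sub hsq)).smul hv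

theorem hasCompactSupport_cutoffField : HasCompactSupport (cutoffField b v) := by
  refine .intro (isCompact_closedBall 0 √b) fun x hx ↦ ?_
  have hb : b ≤ x ⬝ᵥ x := by
    by_contra! hlt
    exact hx (mem_closedBall_zero_iff.2
      ((norm_le_sqrt_dotProduct_self x).trans (Real.sqrt_le_sqrt hlt.le)))
  rw [cutoffField, Real.smoothTransition.zero_of_nonpos (by linarith), zero_smul]

end Cutoff

theorem existsUnique_isIntegralCurve_of_dotProduct_eq_zero {ι : Type*} [Fintype ι]
    {v : (ι → ℝ) → ι → ℝ} (hv : ContDiff ℝ 1 v) (horth : ∀ x, x ⬝ᵥ v x = 0) (x₀ : ι → ℝ) :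
    ∃! γ : ℝ → ι → ℝ, γ 0 = x₀ ∧ IsIntegralCurve γ fun _ ↦ v := by
  set g := cutoffField (x₀ ⬝ᵥ x₀ + 1) v
  have hg : ContDiff ℝ 1 g := hv.cutoffField
  have hg_supp : HasCompactSupport g := hasCompactSupport_cutoffField
  obtain ⟨K, hK⟩ := hg.lipschitzWith_of_hasCompactSupport hg_supp one_ne_zero
  obtain ⟨C, hC⟩ := hg_supp.exists_bound_of_continuous hg.continuous
  have integralCurve_iff : ∀ γ : ℝ → ι → ℝ, γ 0 = x₀ →
      (IsIntegralCurve γ (fun _ ↦ g) ↔ IsIntegralCurve γ fun _ ↦ v) := by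
    intro γ hγ₀
    have on_sphere : ∀ v' : (ι → ℝ) → ι → ℝ, (∀ x, x ⬝ᵥ v' x = 0) →
        IsIntegralCurve γ (fun _ ↦ v') → ∀ t, g (γ t) = v (γ t) := fun v' hv' hγ t ↦
      cutoffField_eq_of_dotProduct_self_le <| by
        rw [dotProduct_self_eq_of_isIntegralCurve hv' hγ t, hγ₀]; linarith
    refine ⟨fun hγ t ↦ ?_, fun hγ t ↦ ?_⟩
    · simpa only [on_sphere g (dotProduct_cutoffField_eq_zero horth) hγ t] using hγ t
    · simpa only [on_sphere v horth hγ t] using hγ t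
  obtain ⟨γ, hγ₀, hγ⟩ := exists_isIntegralCurve_of_lipschitzWith_of_norm_le hK
    (C := C.toNNReal) (fun x ↦ (hC x).trans (Real.le_coe_toNNReal C)) x₀
  refine ⟨γ, ⟨hγ₀, (integralCurve_iff γ hγ₀).1 hγ⟩, fun δ ⟨hδ₀, hδ⟩ ↦ ?_⟩
  exact ODE_solution_unique_univ (s := fun _ ↦ Set.univ) (t₀ := 0) (fun _ ↦ hK.lipschitzOnWith)
    (fun t ↦ ⟨(integralCurve_iff δ hδ₀).2 hδ t, trivial⟩) (fun t ↦ ⟨hγ t, trivial⟩)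
    (hδ₀.trans hγ₀.symm)

section QuadraticField

variable {ι : Type*} [Fintype ι] (B : ι → ι → ι → ℝ)

def quadraticField (y : ι → ℝ) (i : ι) : ℝ := ∑ j, ∑ k, B i j k * y j * y k

theorem contDiff_quadraticField {n : ℕ∞} : ContDiff ℝ n (quadraticField B) := by
  unfold quadraticField; fun_prop

variable {B}

theorem dotProduct_quadraticField_eq_zero (hB : ∀ i j k, B i j k = -B k j i) (y : ι → ℝ) :
    y ⬝ᵥ quadraticField B y = 0 := by
  set T := ∑ i, ∑ j, ∑ k, B i j k * (y i * y j * y k)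
  have hT : y ⬝ᵥ quadraticField B y = T := by
    simp only [dotProduct, quadraticField, mul_sum]
    exact sum_congr rfl fun i _ ↦ sum_congr rfl fun j _ ↦ sum_congr rfl fun k _ ↦ by ring
  have hswap : T = ∑ k, ∑ j, ∑ i, B i j k * (y i * y j * y k) := by
    rw [sum_comm, sum_congr rfl fun j _ ↦ sum_comm, sum_comm]
  have hneg : T = -T := by
    conv_rhs => rw [hswap]
    simp only [← sum_neg_distrib]
    exact sum_congr rfl fun i _ ↦ sum_congr rfl fun j _ ↦ sum_congr rfl fun k _ ↦ by
      rw [hB i j k]; ring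
  rw [hT]; linarith

end QuadraticField

/-- For `B_{ijk} = −B_{kji}`, the quadratic ODE
`y_i' = Σ_{j,k} B_{ijk} y_j y_k` has, for every initial condition `y₀ ∈ ℝ^d`,
a unique globally defined differentiable solution with `y(0) = y₀`. -/
theorem antisymmetric_quadratic_ODE_global_wellposedness
    (d : ℕ) (B : Fin d → Fin d → Fin d → ℝ)
    (hB : ∀ i j k, B i j k = -B k j i)
    (y₀ : Fin d → ℝ) :
    ∃! y : ℝ → Fin d → ℝ,
      y 0 = y₀ ∧
      ∀ (t : ℝ) (i : Fin d),
        HasDerivAt (fun s => y s i) (∑ j, ∑ k, B i j k * y t j * y t k) t := by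
  simpa only [IsIntegralCurve, hasDerivAt_pi, quadraticField] using
    existsUnique_isIntegralCurve_of_dotProduct_eq_zero (contDiff_quadraticField B)
      (dotProduct_quadraticField_eq_zero hB) y₀
end

section
/- Let n ≥ 1, let K ⊂ ℤⁿ be finite, a, b : K → ℝⁿ, and let X(x) = Σ_{k∈K} (a_k sin(2π k·x) + b_k cos(2π k·x)) be a trigonometric polynomial vector field on ℝⁿ. Then there exist d ∈ ℕ, coefficients B : Fin d × Fin d × Fin d → ℝ with B_{ijk} = −B_{kji}, and a smooth map Ψ : ℝⁿ → ℝ^d such that: (a) Ψ(x + m) = Ψ(x) for all m ∈ ℤⁿ; (b) Ψ(x) = Ψ(y) implies x − y ∈ ℤⁿ; (c) the derivative dΨ_x is injective for every x; and (d) whenever φ : ℝ → ℝⁿ is differentiable with φ'(t) = X(φ(t)) for all t, the curve y(t) = Ψ(φ(t)) satisfies y_i'(t) = Σ_{j,k} B_{ijk} y_j(t) y_k(t) for all t and all i. -/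
open Real Finset

noncomputable def Tphase {n : ℕ} (k : Fin n → ℤ) : (Fin n → ℝ) →L[ℝ] ℝ :=
  ∑ j, (2 * π * (k j : ℝ)) • ContinuousLinearMap.proj j

lemma Tphase_apply {n : ℕ} (k : Fin n → ℤ) (x : Fin n → ℝ) :
    Tphase k x = 2 * π * ∑ j, (k j : ℝ) * x j := by
  simp [Tphase, Finset.mul_sum, mul_assoc]

lemma Tphase_add_int {n : ℕ} (k : Fin n → ℤ) (x : Fin n → ℝ) (m : Fin n → ℤ) :
    Tphase k (x + fun i => (m i : ℝ)) = Tphase k x + (∑ j, k j * m j : ℤ) * (2*π) := by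
  rw [Tphase_apply, Tphase_apply]
  push_cast
  rw [Finset.sum_mul, Finset.mul_sum, Finset.mul_sum, ← Finset.sum_add_distrib]
  apply Finset.sum_congr rfl
  intro j _
  simp only [Pi.add_apply]
  ring

lemma Tphase_basis {n : ℕ} (i : Fin n) (x : Fin n → ℝ) :
    Tphase (fun j => if j = i then (1:ℤ) else 0) x = 2 * π * x i := by
  rw [Tphase_apply]
  congr 1
  rw [Fintype.sum_eq_single i]
  · simp
  · intro j hj; simp [hj]

lemma exists_int_of_cos_sin_eq {a b : ℝ} (hc : Real.cos a = Real.cos b)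
    (hs : Real.sin a = Real.sin b) : ∃ m : ℤ, a - b = m * (2*π) := by
  have h : Complex.exp (a * Complex.I) = Complex.exp (b * Complex.I) := by
    rw [Complex.exp_mul_I, Complex.exp_mul_I, ← Complex.ofReal_cos, ← Complex.ofReal_cos,
      ← Complex.ofReal_sin, ← Complex.ofReal_sin, hc, hs]
  rw [Complex.exp_eq_exp_iff_exists_int] at h
  obtain ⟨m, hm⟩ := h
  refine ⟨m, ?_⟩
  have h2 : ((a : ℂ) - b) * Complex.I = ((m : ℝ) * (2*π) : ℝ) * Complex.I := by
    rw [sub_mul, hm]; push_cast; ring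
  have h3 : ((a - b : ℝ) : ℂ) = ((m : ℝ) * (2*π) : ℝ) := by
    have := mul_right_cancel₀ Complex.I_ne_zero h2
    push_cast at this ⊢; exact this
  exact_mod_cast h3

noncomputable def psiz {n N : ℕ} (κ : Fin N → Fin n → ℤ) (z : Fin N × Fin 2)
    (x : Fin n → ℝ) : ℝ :=
  if z.2 = 0 then Real.cos (Tphase (κ z.1) x) else Real.sin (Tphase (κ z.1) x)

noncomputable def coefB {n N : ℕ} (κ : Fin N → Fin n → ℤ) (aa bb : Fin N → Fin n → ℝ)
    (i j k : Fin N × Fin 2) : ℝ :=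
  if k.1 = i.1 then
    (if i.2 = 0 ∧ k.2 = 1 then -(Tphase (κ i.1) (if j.2 = 1 then aa j.1 else bb j.1))
     else if i.2 = 1 ∧ k.2 = 0 then Tphase (κ i.1) (if j.2 = 1 then aa j.1 else bb j.1)
     else 0)
  else 0

lemma coefB_antisymm {n N : ℕ} (κ : Fin N → Fin n → ℤ) (aa bb : Fin N → Fin n → ℝ)
    (i j k : Fin N × Fin 2) : coefB κ aa bb i j k = -coefB κ aa bb k j i := by
  obtain ⟨p, si⟩ := i
  obtain ⟨r, sk⟩ := k
  by_cases h : r = p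
  · subst h
    fin_cases si <;> fin_cases sk <;> simp [coefB]
  · simp [coefB, h, Ne.symm h]

lemma ode_sum_zero {n N : ℕ} (κ : Fin N → Fin n → ℤ) (aa bb : Fin N → Fin n → ℝ)
    (x : Fin n → ℝ) (p : Fin N) :
    (∑ w : Fin N × Fin 2, ∑ v : Fin N × Fin 2,
        coefB κ aa bb (p, (0:Fin 2)) w v * psiz κ w x * psiz κ v x)
    = -Real.sin (Tphase (κ p) x) *
        ∑ q, (Tphase (κ p) (aa q) * Real.sin (Tphase (κ q) x)
            + Tphase (κ p) (bb q) * Real.cos (Tphase (κ q) x)) := by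
  simp only [Fintype.sum_prod_type, Fin.sum_univ_two, coefB, psiz]
  norm_num
  rw [Finset.mul_sum, ← Finset.sum_neg_distrib]
  exact Finset.sum_congr rfl fun q _ => by ring

lemma ode_sum_one {n N : ℕ} (κ : Fin N → Fin n → ℤ) (aa bb : Fin N → Fin n → ℝ)
    (x : Fin n → ℝ) (p : Fin N) :
    (∑ w : Fin N × Fin 2, ∑ v : Fin N × Fin 2,
        coefB κ aa bb (p, (1:Fin 2)) w v * psiz κ w x * psiz κ v x)
    = Real.cos (Tphase (κ p) x) *
        ∑ q, (Tphase (κ p) (aa q) * Real.sin (Tphase (κ q) x)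
            + Tphase (κ p) (bb q) * Real.cos (Tphase (κ q) x)) := by
  simp only [Fintype.sum_prod_type, Fin.sum_univ_two, coefB, psiz]
  norm_num
  rw [Finset.mul_sum]
  exact Finset.sum_congr rfl fun q _ => by ring

lemma ode_key {n N : ℕ} (κ : Fin N → Fin n → ℤ) (aa bb : Fin N → Fin n → ℝ)
    (X : (Fin n → ℝ) → Fin n → ℝ)
    (hX' : ∀ (x : Fin n → ℝ) (p : Fin N), Tphase (κ p) (X x) =
        ∑ q, (Tphase (κ p) (aa q) * Real.sin (Tphase (κ q) x)
            + Tphase (κ p) (bb q) * Real.cos (Tphase (κ q) x)))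
    (φ : ℝ → Fin n → ℝ) (hφ : ∀ t, HasDerivAt φ (X (φ t)) t) (t : ℝ) (z : Fin N × Fin 2) :
    HasDerivAt (fun s => psiz κ z (φ s))
      (∑ w : Fin N × Fin 2, ∑ v : Fin N × Fin 2,
        coefB κ aa bb z w v * psiz κ w (φ t) * psiz κ v (φ t)) t := by
  obtain ⟨p, s⟩ := z
  have hθ : ∀ q : Fin N, HasDerivAt (fun s => Tphase (κ q) (φ s)) (Tphase (κ q) (X (φ t))) t :=
    fun q => (Tphase (κ q)).hasFDerivAt.comp_hasDerivAt t (hφ t)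
  fin_cases s
  · show HasDerivAt (fun s => psiz κ (p, (0:Fin 2)) (φ s))
      (∑ w : Fin N × Fin 2, ∑ v : Fin N × Fin 2,
        coefB κ aa bb (p, (0:Fin 2)) w v * psiz κ w (φ t) * psiz κ v (φ t)) t
    have hfun : (fun s => psiz κ (p, (0:Fin 2)) (φ s))
        = fun s => Real.cos (Tphase (κ p) (φ s)) := by
      funext s; simp [psiz]
    rw [hfun, ode_sum_zero, ← hX']
    exact (hθ p).cos
  · show HasDerivAt (fun s => psiz κ (p, (1:Fin 2)) (φ s))
      (∑ w : Fin N × Fin 2, ∑ v : Fin N × Fin 2,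
        coefB κ aa bb (p, (1:Fin 2)) w v * psiz κ w (φ t) * psiz κ v (φ t)) t
    have hfun : (fun s => psiz κ (p, (1:Fin 2)) (φ s))
        = fun s => Real.sin (Tphase (κ p) (φ s)) := by
      funext s; simp [psiz]
    rw [hfun, ode_sum_one, ← hX']
    exact (hθ p).sin

lemma Tphase_field {n : ℕ} (K : Finset (Fin n → ℤ)) (a b : (Fin n → ℤ) → Fin n → ℝ)
    (X : (Fin n → ℝ) → Fin n → ℝ)
    (hX : ∀ (x : Fin n → ℝ) (i : Fin n),
      X x i = ∑ k ∈ K, (a k i * Real.sin (2 * π * ∑ j, (k j : ℝ) * x j)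
                        + b k i * Real.cos (2 * π * ∑ j, (k j : ℝ) * x j)))
    (k : Fin n → ℤ) (x : Fin n → ℝ) :
    Tphase k (X x) = ∑ m ∈ K, (Tphase k (a m) * Real.sin (Tphase m x)
      + Tphase k (b m) * Real.cos (Tphase m x)) := by
  have h1 : ∑ j, (k j : ℝ) * X x j
      = ∑ m ∈ K, ((∑ j, (k j : ℝ) * a m j) * Real.sin (2 * π * ∑ j', (m j' : ℝ) * x j')
        + (∑ j, (k j : ℝ) * b m j) * Real.cos (2 * π * ∑ j', (m j' : ℝ) * x j')) := by
    simp only [hX, Finset.mul_sum]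
    rw [Finset.sum_comm]
    refine Finset.sum_congr rfl fun m _ => ?_
    rw [Finset.sum_mul, Finset.sum_mul, ← Finset.sum_add_distrib]
    exact Finset.sum_congr rfl fun j _ => by ring
  simp only [Tphase_apply]
  rw [h1, Finset.mul_sum]
  exact Finset.sum_congr rfl fun m _ => by ring

/-- torus case of the key proposition. Every trigonometric
polynomial vector field `X` on `ℝⁿ` (descending to the torus `ℝⁿ/ℤⁿ`) is smoothly
conjugate, via a `ℤⁿ`-periodic embedding `Ψ : ℝⁿ → ℝ^d` of the torus, to the
restriction of a homogeneous quadratic ODE on `ℝ^d` whose coefficient tensor `B`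
satisfies `B_{ijk} = −B_{kji}`. -/
theorem torus_trig_field_embeds_in_quadratic_ODE
    (n : ℕ) (hn : 1 ≤ n) (K : Finset (Fin n → ℤ))
    (a b : (Fin n → ℤ) → Fin n → ℝ)
    (X : (Fin n → ℝ) → Fin n → ℝ)
    (hX : ∀ (x : Fin n → ℝ) (i : Fin n),
      X x i = ∑ k ∈ K, (a k i * Real.sin (2 * π * ∑ j, (k j : ℝ) * x j)
                        + b k i * Real.cos (2 * π * ∑ j, (k j : ℝ) * x j))) :
    ∃ (d : ℕ) (B : Fin d → Fin d → Fin d → ℝ) (Ψ : (Fin n → ℝ) → Fin d → ℝ),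
      (∀ i j k, B i j k = -B k j i) ∧
      ContDiff ℝ (⊤ : ℕ∞) Ψ ∧
      (∀ (x : Fin n → ℝ) (m : Fin n → ℤ), Ψ (x + fun i => (m i : ℝ)) = Ψ x) ∧
      (∀ x y : Fin n → ℝ, Ψ x = Ψ y → ∃ m : Fin n → ℤ, x - y = fun i => (m i : ℝ)) ∧
      (∀ x : Fin n → ℝ, Function.Injective (fderiv ℝ Ψ x)) ∧
      (∀ φ : ℝ → Fin n → ℝ, (∀ t : ℝ, HasDerivAt φ (X (φ t)) t) →
        ∀ (t : ℝ) (i : Fin d),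
          HasDerivAt (fun s => Ψ (φ s) i)
            (∑ j, ∑ k, B i j k * Ψ (φ t) j * Ψ (φ t) k) t) := by
  classical
  set ε : Fin n → (Fin n → ℤ) := fun i j => if j = i then 1 else 0 with hε
  set L : Finset (Fin n → ℤ) := K ∪ Finset.image ε Finset.univ with hLdef
  have hKL : K ⊆ L := Finset.subset_union_left
  have hεL : ∀ i, ε i ∈ L := fun i =>
    Finset.mem_union_right _ (Finset.mem_image_of_mem _ (Finset.mem_univ i))
  set N : ℕ := L.card with hN
  set enum : Fin N ≃ {v // v ∈ L} := L.equivFin.symm with henum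
  set κ : Fin N → Fin n → ℤ := fun p => ((enum p : {v // v ∈ L}) : Fin n → ℤ) with hκ
  set aa : Fin N → Fin n → ℝ := fun q => if κ q ∈ K then a (κ q) else 0 with haa
  set bb : Fin N → Fin n → ℝ := fun q => if κ q ∈ K then b (κ q) else 0 with hbb
  set e : Fin (N * 2) ≃ Fin N × Fin 2 := finProdFinEquiv.symm with he
  -- the key structural identity
  have hX' : ∀ (x : Fin n → ℝ) (p : Fin N), Tphase (κ p) (X x) =
      ∑ q, (Tphase (κ p) (aa q) * Real.sin (Tphase (κ q) x)
          + Tphase (κ p) (bb q) * Real.cos (Tphase (κ q) x)) := by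
    intro x p
    rw [Tphase_field K a b X hX (κ p) x]
    set g : (Fin n → ℤ) → ℝ := fun c => if c ∈ K then
        Tphase (κ p) (a c) * Real.sin (Tphase c x)
          + Tphase (κ p) (b c) * Real.cos (Tphase c x) else 0 with hg
    have h1 : ∀ q : Fin N, Tphase (κ p) (aa q) * Real.sin (Tphase (κ q) x)
        + Tphase (κ p) (bb q) * Real.cos (Tphase (κ q) x) = g (κ q) := by
      intro q
      by_cases h : κ q ∈ K <;> simp [hg, haa, hbb, h, map_zero]
    rw [Finset.sum_congr rfl fun q _ => h1 q]
    have h2 : (∑ q : Fin N, g (κ q)) = ∑ c : {v // v ∈ L}, g ↑c :=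
      Fintype.sum_equiv enum _ _ (fun q => rfl)
    have h3 : (∑ c : {v // v ∈ L}, g ↑c) = ∑ c ∈ L, g c := L.sum_coe_sort g
    rw [h2, h3, hg]
    rw [Finset.sum_ite_mem L K, Finset.inter_eq_right.mpr hKL]
  refine ⟨N * 2, fun i j k => coefB κ aa bb (e i) (e j) (e k),
    fun x i => psiz κ (e i) x, ?_, ?_, ?_, ?_, ?_, ?_⟩
  · intro i j k; exact coefB_antisymm κ aa bb (e i) (e j) (e k)
  · rw [contDiff_pi]
    intro i
    by_cases h : (e i).2 = 0 <;>
      simp only [psiz, h, if_true, if_false, reduceIte] <;>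
      [exact Real.contDiff_cos.comp (Tphase (κ (e i).1)).contDiff;
       exact Real.contDiff_sin.comp (Tphase (κ (e i).1)).contDiff]
  · intro x m
    funext i
    show psiz κ (e i) (x + fun i => (m i : ℝ)) = psiz κ (e i) x
    unfold psiz
    by_cases h : (e i).2 = 0
    · rw [if_pos h, if_pos h, Tphase_add_int, Real.cos_add_int_mul_two_pi]
    · rw [if_neg h, if_neg h, Tphase_add_int, Real.sin_add_int_mul_two_pi]
  · intro x y hxy
    have key : ∀ i : Fin n, ∃ m : ℤ, x i - y i = m := by
      intro i
      set q : Fin N := enum.symm ⟨ε i, hεL i⟩ with hq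
      have hκq : κ q = ε i := by
        rw [hκ]; simp [hq]
      have h0 : psiz κ (q, (0:Fin 2)) x = psiz κ (q, (0:Fin 2)) y := by
        have := congrFun hxy (e.symm (q, (0:Fin 2)))
        simpa [Equiv.apply_symm_apply] using this
      have h1 : psiz κ (q, (1:Fin 2)) x = psiz κ (q, (1:Fin 2)) y := by
        have := congrFun hxy (e.symm (q, (1:Fin 2)))
        simpa [Equiv.apply_symm_apply] using this
      have hc : Real.cos (2*π*x i) = Real.cos (2*π*y i) := by
        simpa [psiz, hκq, hε, Tphase_basis] using h0
      have hs : Real.sin (2*π*x i) = Real.sin (2*π*y i) := by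
        simpa [psiz, hκq, hε, Tphase_basis] using h1
      obtain ⟨m, hm⟩ := exists_int_of_cos_sin_eq hc hs
      refine ⟨m, ?_⟩
      have h2π : (2*π) ≠ 0 := by positivity
      have : (2*π) * (x i - y i) = (2*π) * m := by rw [mul_sub]; linarith [hm]
      exact mul_left_cancel₀ h2π this
    refine ⟨fun i => (key i).choose, ?_⟩
    funext i
    simpa using (key i).choose_spec
  · intro x
    set D : (Fin n → ℝ) →L[ℝ] (Fin (N*2) → ℝ) := ContinuousLinearMap.pi
      (fun i => (if (e i).2 = 0 then -Real.sin (Tphase (κ (e i).1) x)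
        else Real.cos (Tphase (κ (e i).1) x)) • Tphase (κ (e i).1)) with hD
    have hFD : HasFDerivAt (fun x i => psiz κ (e i) x) D x := by
      rw [hD, hasFDerivAt_pi]
      intro i
      by_cases h : (e i).2 = 0
      · rw [if_pos h]
        have hfn : psiz κ (e i) = fun y => Real.cos (Tphase (κ (e i).1) y) := by
          funext y; unfold psiz; rw [if_pos h]
        rw [hfn]
        exact (Real.hasDerivAt_cos _).comp_hasFDerivAt x (Tphase (κ (e i).1)).hasFDerivAt
      · rw [if_neg h]
        have hfn : psiz κ (e i) = fun y => Real.sin (Tphase (κ (e i).1) y) := by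
          funext y; unfold psiz; rw [if_neg h]
        rw [hfn]
        exact (Real.hasDerivAt_sin _).comp_hasFDerivAt x (Tphase (κ (e i).1)).hasFDerivAt
    rw [hFD.fderiv]
    intro u v huv
    have h0 : D (u - v) = 0 := by rw [map_sub, huv, sub_self]
    have huv0 : u - v = 0 := by
      funext i
      have hq : ∀ s : Fin 2, D (u - v) (e.symm (enum.symm ⟨ε i, hεL i⟩, s))
          = (if s = 0 then -Real.sin (2*π*x i) else Real.cos (2*π*x i)) * (2*π*(u - v) i) := by
        intro s
        have hκq : κ (enum.symm ⟨ε i, hεL i⟩) = ε i := by rw [hκ]; simp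
        have hTb : ∀ w : Fin n → ℝ, Tphase (ε i) w = 2*π*w i := by
          intro w; simp only [hε]; exact Tphase_basis i w
        rw [hD]
        simp only [ContinuousLinearMap.pi_apply, Equiv.apply_symm_apply,
          ContinuousLinearMap.coe_smul', Pi.smul_apply, smul_eq_mul]
        rw [hκq]
        simp only [hTb]
      have hc := congrFun h0 (e.symm (enum.symm ⟨ε i, hεL i⟩, (1:Fin 2)))
      have hs := congrFun h0 (e.symm (enum.symm ⟨ε i, hεL i⟩, (0:Fin 2)))
      rw [hq 1, if_neg (by decide : ¬(1:Fin 2) = 0)] at hc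
      rw [hq 0, if_pos rfl] at hs
      simp only [Pi.zero_apply] at hc hs
      have hsq := Real.sin_sq_add_cos_sq (2*π*x i)
      have hz : 2*π*(u - v) i = 0 := by
        linear_combination Real.cos (2*π*x i) * hc - Real.sin (2*π*x i) * hs
          - (2*π*(u - v) i) * hsq
      have h2π : (2*π) ≠ 0 := by positivity
      have : (u - v) i = 0 := by
        rcases mul_eq_zero.mp hz with h | h
        · exact absurd h h2π
        · exact h
      simpa using this
    have := sub_eq_zero.mp huv0
    exact this
  · intro φ hφ t i
    have hmain := ode_key κ aa bb X hX' φ hφ t (e i)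
    convert hmain using 1
    calc (∑ j, ∑ k, coefB κ aa bb (e i) (e j) (e k) * psiz κ (e j) (φ t) * psiz κ (e k) (φ t))
        = ∑ j, ∑ v : Fin N × Fin 2,
            coefB κ aa bb (e i) (e j) v * psiz κ (e j) (φ t) * psiz κ v (φ t) :=
          Finset.sum_congr rfl fun j _ => Fintype.sum_equiv e
            (fun k => coefB κ aa bb (e i) (e j) (e k) * psiz κ (e j) (φ t) * psiz κ (e k) (φ t))
            (fun v => coefB κ aa bb (e i) (e j) v * psiz κ (e j) (φ t) * psiz κ v (φ t))
            (fun k => rfl)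
      _ = ∑ w : Fin N × Fin 2, ∑ v : Fin N × Fin 2,
            coefB κ aa bb (e i) w v * psiz κ w (φ t) * psiz κ v (φ t) :=
          Fintype.sum_equiv e
            (fun j => ∑ v : Fin N × Fin 2,
              coefB κ aa bb (e i) (e j) v * psiz κ (e j) (φ t) * psiz κ v (φ t))
            (fun w => ∑ v : Fin N × Fin 2,
              coefB κ aa bb (e i) w v * psiz κ w (φ t) * psiz κ v (φ t))
            (fun j => rfl)
end

section
/- Let n ≥ 1 and let P be a real polynomial in n+1 variables of total degree D. Then there exist polynomials H₀, H₁, …, H_D in n+1 variables such that each H_j is homogeneous of degree j and harmonic (Δ H_j = 0, where Δ = Σ_{i=1}^{n+1} ∂²/∂x_i²), and P(x) = Σ_{j=0}^{D} H_j(x) for every x ∈ ℝ^{n+1} with ‖x‖ = 1. -/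
/-!
For `u` homogeneous of degree `m` in `N` variables,
`Δ(‖x‖^{2j+2} u) = 2(j+1)(N + 2m + 2j) ‖x‖^{2j} u + ‖x‖^{2j+2} Δu`.
Hence for `p` homogeneous of degree `d` the coefficients of `h = ∑_{j ≤ d/2} c_j ‖x‖^{2j} Δ^j p`,
`c_0 = 1`, can be chosen so that `Δh` telescopes to `0`; then `p - h` is `‖x‖²` times a
homogeneous polynomial of degree `d - 2`. Replacing the top homogeneous component of `P` by its
harmonic part plus that lower-degree quotient changes `P` only by a multiple of `‖x‖² - 1`, and
induction on the degree finishes the proof.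
-/

open Finset MvPolynomial

namespace MvPolynomial

theorem totalDegree_sub_homogeneousComponent_le {σ R : Type*} [CommRing R]
    {P : MvPolynomial σ R} {D : ℕ} (hP : P.totalDegree ≤ D + 1) :
    (P - homogeneousComponent (D + 1) P).totalDegree ≤ D := by
  refine Finset.sup_le fun d hd => ?_
  rw [mem_support_iff, coeff_sub, coeff_homogeneousComponent] at hd
  have hne : d.degree ≠ D + 1 := fun h => hd (by simp [h])
  have hle : d.degree ≤ D + 1 :=
    (le_totalDegree (mem_support_iff.2 fun h => hd (by simp [h]))).trans hP
  change d.degree ≤ D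
  omega

section CommSemiring

variable {σ R : Type*} [CommSemiring R]

theorem IsHomogeneous.pderiv_eq_zero {u : MvPolynomial σ R} (hu : u.IsHomogeneous 0) (i : σ) :
    pderiv i u = 0 := by
  rw [← totalDegree_zero_iff_isHomogeneous, totalDegree_eq_zero_iff_eq_C] at hu
  rw [hu, pderiv_C]

variable [Fintype σ]

noncomputable def laplacian : Module.End R (MvPolynomial σ R) :=
  ∑ i, (pderiv i).toLinearMap * (pderiv i).toLinearMap

noncomputable def normSq : MvPolynomial σ R :=
  ∑ i, X i ^ 2

theorem laplacian_apply (p : MvPolynomial σ R) :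
    laplacian p = ∑ i, pderiv i (pderiv i p) := by
  simp [laplacian]

theorem laplacian_mul (f g : MvPolynomial σ R) :
    laplacian (f * g) = laplacian f * g + 2 * ∑ i, pderiv i f * pderiv i g + f * laplacian g := by
  simp only [laplacian_apply, pderiv_mul, map_add, sum_add_distrib, sum_mul, mul_sum, two_mul]
  ring

theorem pderiv_normSq (i : σ) : pderiv i (normSq : MvPolynomial σ R) = 2 * X i := by
  classical
  simp [normSq, pderiv_X, Pi.single_apply, mul_comm]

theorem laplacian_normSq :
    laplacian (normSq : MvPolynomial σ R) = 2 * Fintype.card σ := by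
  have h2 : ∀ i : σ, pderiv i (2 : MvPolynomial σ R) = 0 := fun i => (pderiv i).map_natCast 2
  simp [laplacian_apply, pderiv_normSq, h2, mul_comm]

theorem eval_normSq (x : σ → R) : eval x normSq = ∑ i, x i ^ 2 := by
  simp [normSq]

theorem isHomogeneous_normSq : (normSq : MvPolynomial σ R).IsHomogeneous 2 :=
  IsHomogeneous.sum _ _ _ fun i _ => isHomogeneous_X_pow i 2

theorem IsHomogeneous.laplacian_normSq_mul {u : MvPolynomial σ R} {m : ℕ}
    (hu : u.IsHomogeneous m) :
    laplacian (normSq * u) = (2 * Fintype.card σ + 4 * m) • u + normSq * laplacian u := by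
  have hEuler := hu.sum_X_mul_pderiv
  simp only [laplacian_mul, laplacian_normSq, pderiv_normSq, mul_assoc, ← mul_sum, hEuler]
  simp only [nsmul_eq_mul]
  push_cast
  ring

theorem IsHomogeneous.laplacian_normSq_pow_succ_mul {u : MvPolynomial σ R} {m : ℕ}
    (hu : u.IsHomogeneous m) (j : ℕ) :
    laplacian (normSq ^ (j + 1) * u) =
      (2 * (j + 1) * (Fintype.card σ + 2 * m + 2 * j)) • (normSq ^ j * u) +
        normSq ^ (j + 1) * laplacian u := by
  induction j with
  | zero =>
    rw [zero_add, pow_one, pow_zero, one_mul, hu.laplacian_normSq_mul]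
    congr 2
    ring
  | succ j ih =>
    have hv : (normSq ^ (j + 1) * u).IsHomogeneous (2 * (j + 1) + m) :=
      (isHomogeneous_normSq.pow _).mul hu
    rw [pow_succ', mul_assoc, hv.laplacian_normSq_mul, ih]
    simp only [nsmul_eq_mul]
    push_cast
    ring

theorem IsHomogeneous.isHomogeneous_laplacian {u : MvPolynomial σ R} {m : ℕ}
    (hu : u.IsHomogeneous m) : (laplacian u).IsHomogeneous (m - 2) := by
  rw [laplacian_apply]
  exact IsHomogeneous.sum _ _ _ fun i _ => by
    simpa [Nat.sub_sub] using (hu.pderiv (i := i)).pderiv (i := i)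

theorem IsHomogeneous.laplacian_eq_zero {u : MvPolynomial σ R} {m : ℕ} (hu : u.IsHomogeneous m)
    (hm : m ≤ 1) : laplacian u = 0 := by
  have hu' : ∀ i, (pderiv i u).IsHomogeneous 0 := fun i => by
    simpa [Nat.sub_eq_zero_of_le hm] using hu.pderiv (i := i)
  simp [laplacian_apply, fun i => (hu' i).pderiv_eq_zero i]

theorem IsHomogeneous.isHomogeneous_laplacian_pow {u : MvPolynomial σ R} {m : ℕ}
    (hu : u.IsHomogeneous m) (j : ℕ) : ((laplacian ^ j) u).IsHomogeneous (m - 2 * j) := by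
  induction j with
  | zero => simpa using hu
  | succ j ih => simpa [pow_succ', Nat.sub_sub, mul_add] using ih.isHomogeneous_laplacian

end CommSemiring

section Field

-- The denominator is the constant of `laplacian_normSq_pow_succ_mul` for `u = Δ^{j+1} p`,
-- of degree `d - 2 (j + 1)`.
noncomputable def harmonicCoeff (K : Type*) [Field K] (N d : ℕ) : ℕ → K
  | 0 => 1
  | j + 1 =>
    -harmonicCoeff K N d j / (2 * (j + 1) * (N + 2 * (d - 2 * (j + 1)) + 2 * j) : ℕ)

variable {σ K : Type*} [Fintype σ] [Field K]

noncomputable def harmonicPart (d : ℕ) (p : MvPolynomial σ K) : MvPolynomial σ K :=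
  ∑ j ∈ range (d / 2 + 1),
    harmonicCoeff K (Fintype.card σ) d j • (normSq ^ j * (laplacian ^ j) p)

variable {p : MvPolynomial σ K} {d : ℕ}

theorem IsHomogeneous.isHomogeneous_harmonicPart (hp : p.IsHomogeneous d) :
    (harmonicPart d p).IsHomogeneous d := by
  refine IsHomogeneous.sum _ _ _ fun j hj => ?_
  have hterm := (isHomogeneous_normSq.pow j).mul (hp.isHomogeneous_laplacian_pow j)
  rw [show 2 * j + (d - 2 * j) = d by grind] at hterm
  rw [smul_eq_C_mul]
  exact hterm.C_mul _

theorem IsHomogeneous.exists_eq_harmonicPart_add_normSq_mul (hp : p.IsHomogeneous d) :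
    ∃ q : MvPolynomial σ K, q.IsHomogeneous (d - 2) ∧ p = harmonicPart d p + normSq * q := by
  refine ⟨-∑ j ∈ range (d / 2),
    harmonicCoeff K (Fintype.card σ) d (j + 1) • (normSq ^ j * (laplacian ^ (j + 1)) p), ?_, ?_⟩
  · refine (IsHomogeneous.sum _ _ _ fun j hj => ?_).neg
    have hterm := (isHomogeneous_normSq.pow j).mul (hp.isHomogeneous_laplacian_pow (j + 1))
    rw [show 2 * j + (d - 2 * (j + 1)) = d - 2 by grind] at hterm
    rw [smul_eq_C_mul]
    exact hterm.C_mul _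
  · simp [harmonicPart, sum_range_succ', harmonicCoeff, mul_sum, ← mul_assoc,
      ← pow_succ']

variable [CharZero K]

theorem harmonicCoeff_succ_mul {N : ℕ} (hN : 0 < N) (d j : ℕ) :
    harmonicCoeff K N d (j + 1) * (2 * (j + 1) * (N + 2 * (d - 2 * (j + 1)) + 2 * j) : ℕ) =
      -harmonicCoeff K N d j :=
  div_mul_cancel₀ _ (Nat.cast_ne_zero.2 (by positivity))

theorem IsHomogeneous.laplacian_harmonicCoeff_smul_succ [Nonempty σ]
    (hp : p.IsHomogeneous d) (j : ℕ) :
    laplacian (harmonicCoeff K (Fintype.card σ) d (j + 1) •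
        (normSq ^ (j + 1) * (laplacian ^ (j + 1)) p)) =
      harmonicCoeff K (Fintype.card σ) d (j + 1) • (normSq ^ (j + 1) * (laplacian ^ (j + 2)) p) -
        harmonicCoeff K (Fintype.card σ) d j • (normSq ^ j * (laplacian ^ (j + 1)) p) := by
  rw [map_smul, (hp.isHomogeneous_laplacian_pow (j + 1)).laplacian_normSq_pow_succ_mul j,
    smul_add, ← Nat.cast_smul_eq_nsmul K, smul_smul,
    harmonicCoeff_succ_mul Fintype.card_pos, neg_smul, pow_succ' laplacian (j + 1),
    Module.End.mul_apply]
  abel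

theorem IsHomogeneous.laplacian_harmonicPart [Nonempty σ] (hp : p.IsHomogeneous d) :
    laplacian (harmonicPart d p) = 0 := by
  set T : ℕ → MvPolynomial σ K := fun j =>
    harmonicCoeff K (Fintype.card σ) d j • (normSq ^ j * (laplacian ^ (j + 1)) p)
  have hlast : (laplacian ^ (d / 2 + 1)) p = 0 := by
    rw [pow_succ', Module.End.mul_apply]
    exact (hp.isHomogeneous_laplacian_pow (d / 2)).laplacian_eq_zero (by omega)
  have hfirst : laplacian
      (harmonicCoeff K (Fintype.card σ) d 0 • (normSq ^ 0 * (laplacian ^ 0) p)) = T 0 := by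
    simp [T, harmonicCoeff]
  rw [harmonicPart, map_sum, sum_range_succ', hfirst,
    sum_congr rfl fun j _ => hp.laplacian_harmonicCoeff_smul_succ j, sum_range_sub T]
  simp [T, hlast]

theorem exists_harmonic_sum_add_normSq_sub_one_mul [Nonempty σ] (D : ℕ) (P : MvPolynomial σ K)
    (hP : P.totalDegree ≤ D) :
    ∃ H : ℕ → MvPolynomial σ K, (∀ j, (H j).IsHomogeneous j ∧ laplacian (H j) = 0) ∧
      ∃ Q, P = ∑ j ∈ range (D + 1), H j + (normSq - 1) * Q := by
  induction D generalizing P with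
  | zero =>
    have hP0 : P.IsHomogeneous 0 := (totalDegree_zero_iff_isHomogeneous _).1 (Nat.le_zero.1 hP)
    refine ⟨Pi.single 0 P, fun j => ?_, 0, by simp⟩
    rcases eq_or_ne j 0 with rfl | hj
    · simpa using ⟨hP0, hP0.laplacian_eq_zero zero_le_one⟩
    · simp [hj, isHomogeneous_zero]
  | succ D ih =>
    set p := homogeneousComponent (D + 1) P
    have hp : p.IsHomogeneous (D + 1) := homogeneousComponent_isHomogeneous _ _
    obtain ⟨q, hq, hpq⟩ := hp.exists_eq_harmonicPart_add_normSq_mul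
    have hdeg : (P - p + q).totalDegree ≤ D :=
      (totalDegree_add _ _).trans <| max_le (totalDegree_sub_homogeneousComponent_le hP)
        (hq.totalDegree_le.trans (by omega))
    obtain ⟨H, hH, Q, hPQ⟩ := ih _ hdeg
    refine ⟨Function.update H (D + 1) (harmonicPart (D + 1) p), fun j => ?_, Q + q, ?_⟩
    · rcases eq_or_ne j (D + 1) with rfl | hj
      · simpa using ⟨hp.isHomogeneous_harmonicPart, hp.laplacian_harmonicPart⟩
      · simpa [hj] using hH j
    · rw [sum_range_succ, Function.update_self,
        sum_congr rfl fun j hj => Function.update_of_ne (by grind) _ H]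
      linear_combination hPQ + hpq

end Field

end MvPolynomial

theorem polynomial_is_sum_of_spherical_harmonics_on_sphere_general
    (n : ℕ) (D : ℕ)
    (P : MvPolynomial (Fin (n + 1)) ℝ) (hP : P.totalDegree ≤ D) :
    ∃ H : ℕ → MvPolynomial (Fin (n + 1)) ℝ,
      (∀ j ≤ D, (H j).IsHomogeneous j ∧
        (∑ i : Fin (n + 1), pderiv i (pderiv i (H j))) = 0) ∧
      (∀ x : Fin (n + 1) → ℝ, (∑ i, x i ^ 2) = 1 →
        eval x P = ∑ j ∈ Finset.range (D + 1), eval x (H j)) := by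
  obtain ⟨H, hH, Q, hPQ⟩ := exists_harmonic_sum_add_normSq_sub_one_mul D P hP
  refine ⟨H, fun j _ => ⟨(hH j).1, laplacian_apply (H j) ▸ (hH j).2⟩, fun x hx => ?_⟩
  simp [hPQ, eval_normSq, hx]

/-- Every real polynomial `P` in `n+1` variables of total degree `D`
agrees, on the unit sphere of `ℝ^{n+1}`, with a sum `Σ_{j=0}^{D} H_j` where each `H_j`
is a homogeneous harmonic polynomial of degree `j` (a spherical harmonic). -/
theorem polynomial_is_sum_of_spherical_harmonics_on_sphere
    (n : ℕ) (hn : 1 ≤ n) (D : ℕ)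
    (P : MvPolynomial (Fin (n + 1)) ℝ) (hP : P.totalDegree ≤ D) :
    ∃ H : ℕ → MvPolynomial (Fin (n + 1)) ℝ,
      (∀ j ≤ D, (H j).IsHomogeneous j ∧
        (∑ i : Fin (n + 1), pderiv i (pderiv i (H j))) = 0) ∧
      (∀ x : Fin (n + 1) → ℝ, (∑ i, x i ^ 2) = 1 →
        eval x P = ∑ j ∈ Finset.range (D + 1), eval x (H j)) :=
  polynomial_is_sum_of_spherical_harmonics_on_sphere_general n D P hP
end

section
/- Let n ≥ 1 and let X : ℝ^{n+1} → ℝ^{n+1} be a polynomial map with ⟨X(x), x⟩ = 0 for every x with ‖x‖ = 1 (so X is tangent to the unit sphere 𝕊ⁿ). Then there exist d ∈ ℕ, coefficients B : Fin d × Fin d × Fin d → ℝ with B_{ijk} = −B_{kji}, and a polynomial map Ψ : ℝ^{n+1} → ℝ^d such that: (a) Ψ restricted to 𝕊ⁿ is injective; (b) for every x ∈ 𝕊ⁿ the derivative dΨ_x is injective on the tangent space {v : ⟨v, x⟩ = 0}; and (c) whenever γ : ℝ → ℝ^{n+1} is differentiable with ‖γ(t)‖ = 1 and γ'(t) = X(γ(t))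 for all t, the curve y(t) = Ψ(γ(t)) satisfies y_i'(t) = Σ_{j,k} B_{ijk} y_j(t) y_k(t) for all t and all i. -/
/-!
On the sphere a tangent field can be written `X = A(x) x` with the skew matrix
`A_{il} = P_i x_l - P_l x_i`, because `|x|² = 1` and `⟨X, x⟩ = 0`. Along an integral curve,
therefore, `d/dt x^μ = ∑_{i,l} A_{il}(x) (x_l ∂_i) x^μ`. The operator `x_l ∂_i` preserves the
space of polynomials of degree `≤ K`, and for the Fischer inner product (monomials orthogonal,
`‖x^μ‖² = μ!`) its adjoint is `x_i ∂_l`. In the orthonormal basis `Ψ_μ = x^μ / √(μ!)` the system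
is thus `Ψ' = M(x) Ψ` with `M(x)` skew-symmetric, and once `K` bounds the degree of `A` the
entries of `M(x)` are linear in `Ψ`; this gives the quadratic system with `B_{μνβ} = -B_{βνμ}`.
The degree-one coordinates of `Ψ` are the coordinates of `x`, so `Ψ` is an injective immersion.
-/

open Finset MvPolynomial
open Finsupp (single single_le_iff degree_single single_eq_same single_eq_of_ne)
open scoped Nat

theorem MvPolynomial.hasDerivAt_eval_comp {σ : Type*} [Fintype σ] {γ : ℝ → σ → ℝ}
    {γ' : σ → ℝ} {t : ℝ} (hγ : HasDerivAt γ γ' t) (q : MvPolynomial σ ℝ) :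
    HasDerivAt (fun s => eval (γ s) q) (∑ i, eval (γ t) (pderiv i q) * γ' i) t := by
  classical
  induction q using MvPolynomial.induction_on with
  | C a => simpa [pderiv_C] using hasDerivAt_const t a
  | add p q hp hq => simpa [add_mul, sum_add_distrib] using hp.fun_add hq
  | mul_X p j hp =>
    simp only [map_mul, eval_X]
    refine (hp.fun_mul (hasDerivAt_pi.1 hγ j)).congr_deriv ?_
    have hX : ∑ i, eval (γ t) (p * pderiv i (X j)) * γ' i = eval (γ t) p * γ' j := by
      rw [sum_eq_single j (fun i _ hij => by simp [pderiv_X_of_ne hij.symm]) (by simp)]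
      simp
    simp only [pderiv_mul, map_add, add_mul, sum_add_distrib]
    rw [hX]
    simp only [map_mul, eval_X, Finset.sum_mul]
    exact congrArg₂ _ (sum_congr rfl fun _ _ => by ring) rfl

lemma eq_zero_of_fderiv_apply_eq_zero {σ ι : Type*} [Fintype σ] [Fintype ι]
    {Ψ : (σ → ℝ) → ι → ℝ} {x : σ → ℝ} (hΨ : DifferentiableAt ℝ Ψ x) {c : σ → ι}
    (hc : ∀ y j, Ψ y (c j) = y j) {v : σ → ℝ} (hv : fderiv ℝ Ψ x v = 0) : v = 0 := by
  funext j
  have h1 := hasFDerivAt_pi'.1 hΨ.hasFDerivAt (c j)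
  have h2 : HasFDerivAt (fun y => Ψ y (c j)) (ContinuousLinearMap.proj (R := ℝ) j) x := by
    simpa only [hc] using hasFDerivAt_apply j x
  simpa [hv] using (congrArg (· v) (h1.unique h2)).symm

namespace SphereEmbedding

section SkewPart

variable {σ : Type*}

noncomputable def skewPart (P : σ → MvPolynomial σ ℝ) (i l : σ) : MvPolynomial σ ℝ :=
  P i * X l - P l * X i

lemma skewPart_swap (P : σ → MvPolynomial σ ℝ) (i l : σ) :
    skewPart P l i = -skewPart P i l := by
  unfold skewPart
  ring

lemma totalDegree_skewPart_le (P : σ → MvPolynomial σ ℝ) {K : ℕ}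
    (hP : ∀ i, (P i).totalDegree + 1 ≤ K) (i l : σ) : (skewPart P i l).totalDegree ≤ K := by
  refine (totalDegree_sub _ _).trans (max_le ?_ ?_) <;>
  · refine (totalDegree_mul _ _).trans ?_
    rw [totalDegree_X]
    linarith [hP i, hP l]

lemma eval_eq_sum_eval_skewPart_mul [Fintype σ] {P : σ → MvPolynomial σ ℝ} {x : σ → ℝ}
    (hx : ∑ i, x i ^ 2 = 1) (htan : ∑ i, eval x (P i) * x i = 0) (i : σ) :
    eval x (P i) = ∑ l, eval x (skewPart P i l) * x l := by
  have : ∑ l, eval x (skewPart P i l) * x l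
      = eval x (P i) * ∑ l, x l ^ 2 - (∑ l, eval x (P l) * x l) * x i := by
    simp only [skewPart, map_sub, map_mul, eval_X, mul_sum, Finset.sum_mul, ← sum_sub_distrib]
    exact sum_congr rfl fun l _ => by ring
  rw [this, hx, htan]
  ring

end SkewPart

section WeightedMonomials

variable {σ : Type*} [Fintype σ]

noncomputable def fischerWeight (μ : σ →₀ ℕ) : ℝ := (√(∏ r, ((μ r)! : ℝ)))⁻¹

lemma fischerWeight_pos (μ : σ →₀ ℕ) : 0 < fischerWeight μ := by
  unfold fischerWeight
  positivity

lemma fischerWeight_sq (μ : σ →₀ ℕ) : fischerWeight μ ^ 2 = (∏ r, ((μ r)! : ℝ))⁻¹ := by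
  rw [fischerWeight, inv_pow, Real.sq_sqrt (by positivity)]

noncomputable def weightedMonomial (μ : σ →₀ ℕ) : MvPolynomial σ ℝ :=
  monomial μ (fischerWeight μ)

lemma eval_weightedMonomial_single (x : σ → ℝ) (j : σ) :
    eval x (weightedMonomial (single j 1)) = x j := by
  classical
  have : fischerWeight (single j 1 : σ →₀ ℕ) = 1 := by
    simp [fischerWeight, Finsupp.single_apply, apply_ite]
  rw [weightedMonomial, this, ← X, eval_X]

noncomputable def exponentsLE (σ : Type*) [Finite σ] (K : ℕ) : Finset (σ →₀ ℕ) :=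
  (Finsupp.finite_of_degree_le K).toFinset

lemma mem_exponentsLE {K : ℕ} {μ : σ →₀ ℕ} : μ ∈ exponentsLE σ K ↔ μ.degree ≤ K :=
  Set.Finite.mem_toFinset _

lemma single_mem_exponentsLE {K : ℕ} (hK : 1 ≤ K) (j : σ) : single j 1 ∈ exponentsLE σ K := by
  rwa [mem_exponentsLE, degree_single]

lemma eval_eq_sum_exponentsLE (x : σ → ℝ) {K : ℕ} {Q : MvPolynomial σ ℝ}
    (hQ : Q.totalDegree ≤ K) :
    eval x Q = ∑ ν ∈ exponentsLE σ K, coeff ν Q / fischerWeight ν * eval x (weightedMonomial ν) := by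
  have hsupp : Q.support ⊆ exponentsLE σ K := fun ν hν =>
    mem_exponentsLE.2 ((le_totalDegree hν).trans hQ)
  rw [eval_eq, sum_subset hsupp fun ν _ hν => by rw [MvPolynomial.notMem_support_iff.1 hν, zero_mul]]
  refine sum_congr rfl fun ν _ => ?_
  have := (fischerWeight_pos ν).ne'
  rw [weightedMonomial, eval_monomial]
  field_simp
  rfl

end WeightedMonomials

variable {σ : Type*} [Fintype σ] [DecidableEq σ]

lemma prod_factorial_add_single (γ : σ →₀ ℕ) (i : σ) :
    ∏ r, ((γ + single i 1 : σ →₀ ℕ) r)! = (γ i + 1) * ∏ r, (γ r)! := by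
  rw [Fintype.prod_eq_mul_prod_compl i, Fintype.prod_eq_mul_prod_compl i fun r => (γ r)!,
    prod_congr rfl fun r hr => by
      rw [Finsupp.add_apply, single_eq_of_ne (by simpa using hr), add_zero]]
  simp [Nat.factorial_succ, mul_assoc]

lemma mul_prod_factorial_eq_of_add_single_eq {μ β : σ →₀ ℕ} {i l : σ}
    (h : β + single i 1 = μ + single l 1) :
    μ i * ∏ r, (β r)! = β l * ∏ r, (μ r)! := by
  obtain rfl | hil := eq_or_ne i l
  · rw [add_right_cancel h]
  have hi : single i 1 ≤ μ := by
    have := DFunLike.congr_fun h i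
    simp only [Finsupp.add_apply, single_eq_same, single_eq_of_ne hil] at this
    exact single_le_iff.2 (by omega)
  obtain ⟨γ, rfl⟩ : ∃ γ, μ = γ + single i 1 := ⟨μ - single i 1, (tsub_add_cancel_of_le hi).symm⟩
  obtain rfl : β = γ + single l 1 := add_right_cancel (h.trans (add_right_comm _ _ _))
  rw [prod_factorial_add_single, prod_factorial_add_single]
  simp only [Finsupp.add_apply, single_eq_same]
  ring

/-- The matrix of the operator `x_l ∂_i` in the basis of weighted monomials. -/
noncomputable def shiftMatrix (i l : σ) (μ β : σ →₀ ℕ) : ℝ :=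
  if β + single i 1 = μ + single l 1 then fischerWeight μ / fischerWeight β * μ i else 0

lemma shiftMatrix_swap (i l : σ) (μ β : σ →₀ ℕ) :
    shiftMatrix l i β μ = shiftMatrix i l μ β := by
  unfold shiftMatrix
  by_cases h : β + single i 1 = μ + single l 1
  · rw [if_pos h.symm, if_pos h]
    have hfact : (μ i : ℝ) * ∏ r, ((β r)! : ℝ) = β l * ∏ r, ((μ r)! : ℝ) := by
      exact_mod_cast mul_prod_factorial_eq_of_add_single_eq h
    have hsq : fischerWeight β ^ 2 * β l = fischerWeight μ ^ 2 * μ i := by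
      rw [fischerWeight_sq, fischerWeight_sq]
      field_simp
      linear_combination hfact.symm
    have := (fischerWeight_pos μ).ne'
    have := (fischerWeight_pos β).ne'
    field_simp
    linear_combination hsq
  · rw [if_neg (Ne.symm h), if_neg h]

lemma eval_X_mul_pderiv_weightedMonomial (x : σ → ℝ) (i l : σ) {K : ℕ} {μ : σ →₀ ℕ}
    (hμ : μ.degree ≤ K) :
    eval x (X l * pderiv i (weightedMonomial μ))
      = ∑ β ∈ exponentsLE σ K, shiftMatrix i l μ β * eval x (weightedMonomial β) := by
  rw [weightedMonomial, pderiv_monomial, ← pow_one (X l), ← monomial_single_add]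
  obtain hi | hi := Nat.eq_zero_or_pos (μ i)
  · rw [hi, Nat.cast_zero, mul_zero, monomial_zero, map_zero]
    refine (sum_eq_zero fun β _ => ?_).symm
    simp [shiftMatrix, hi]
  set β₀ := μ - single i 1 + single l 1
  have hβ₀ : β₀ + single i 1 = μ + single l 1 := by
    rw [add_right_comm, tsub_add_cancel_of_le (single_le_iff.2 hi)]
  have hβ₀K : β₀ ∈ exponentsLE σ K := by
    rw [mem_exponentsLE]
    have := congrArg Finsupp.degree hβ₀
    simp only [map_add, degree_single] at this
    omega
  rw [sum_eq_single_of_mem β₀ hβ₀K fun β _ hne => ?_]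
  · have := (fischerWeight_pos β₀).ne'
    rw [shiftMatrix, if_pos hβ₀, weightedMonomial, eval_monomial, eval_monomial,
      add_comm (single l 1)]
    field_simp
    rfl
  · rw [shiftMatrix, if_neg fun h => hne (add_right_cancel (h.trans hβ₀.symm)), zero_mul]

noncomputable def quadraticCoeff (P : σ → MvPolynomial σ ℝ) (μ ν β : σ →₀ ℕ) : ℝ :=
  ∑ i, ∑ l, coeff ν (skewPart P i l) / fischerWeight ν * shiftMatrix i l μ β

lemma quadraticCoeff_antisymm (P : σ → MvPolynomial σ ℝ) (μ ν β : σ →₀ ℕ) :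
    quadraticCoeff P β ν μ = -quadraticCoeff P μ ν β := by
  unfold quadraticCoeff
  rw [sum_comm]
  simp only [← sum_neg_distrib]
  refine sum_congr rfl fun l _ => sum_congr rfl fun i _ => ?_
  rw [shiftMatrix_swap, skewPart_swap, coeff_neg]
  ring

lemma sum_eval_pderiv_mul_eq_sum_quadraticCoeff {P : σ → MvPolynomial σ ℝ} {K : ℕ}
    (hP : ∀ i l, (skewPart P i l).totalDegree ≤ K) {x : σ → ℝ} (hx : ∑ i, x i ^ 2 = 1)
    (htan : ∑ i, eval x (P i) * x i = 0) {μ : σ →₀ ℕ} (hμ : μ.degree ≤ K) :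
    ∑ i, eval x (pderiv i (weightedMonomial μ)) * eval x (P i)
      = ∑ ν ∈ exponentsLE σ K, ∑ β ∈ exponentsLE σ K,
          quadraticCoeff P μ ν β * eval x (weightedMonomial ν) * eval x (weightedMonomial β) := by
  calc ∑ i, eval x (pderiv i (weightedMonomial μ)) * eval x (P i)
      = ∑ i, ∑ l, eval x (skewPart P i l) * eval x (X l * pderiv i (weightedMonomial μ)) := by
        refine sum_congr rfl fun i _ => ?_
        rw [eval_eq_sum_eval_skewPart_mul hx htan, mul_sum]
        refine sum_congr rfl fun l _ => ?_
        rw [map_mul, eval_X]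
        ring
    _ = ∑ i, ∑ l, ∑ ν ∈ exponentsLE σ K, ∑ β ∈ exponentsLE σ K,
          coeff ν (skewPart P i l) / fischerWeight ν * shiftMatrix i l μ β *
            eval x (weightedMonomial ν) * eval x (weightedMonomial β) := by
        simp only [eval_eq_sum_exponentsLE x (hP _ _),
          eval_X_mul_pderiv_weightedMonomial x _ _ hμ, sum_mul_sum]
        exact sum_congr rfl fun _ _ => sum_congr rfl fun _ _ =>
          sum_congr rfl fun _ _ => sum_congr rfl fun _ _ => by ring
    _ = _ := by
        simp only [quadraticCoeff, Finset.sum_mul]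
        simp_rw [sum_comm (s := (univ : Finset σ)) (t := exponentsLE σ K)]

lemma hasDerivAt_eval_weightedMonomial_comp {P : σ → MvPolynomial σ ℝ} {K : ℕ}
    (hP : ∀ i l, (skewPart P i l).totalDegree ≤ K) {γ : ℝ → σ → ℝ} {t : ℝ}
    (hsphere : ∑ i, γ t i ^ 2 = 1) (htan : ∑ i, eval (γ t) (P i) * γ t i = 0)
    (hγ : HasDerivAt γ (fun i => eval (γ t) (P i)) t) {μ : σ →₀ ℕ} (hμ : μ.degree ≤ K) :
    HasDerivAt (fun s => eval (γ s) (weightedMonomial μ))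
      (∑ ν ∈ exponentsLE σ K, ∑ β ∈ exponentsLE σ K, quadraticCoeff P μ ν β *
        eval (γ t) (weightedMonomial ν) * eval (γ t) (weightedMonomial β)) t :=
  (hasDerivAt_eval_comp hγ _).congr_deriv
    (sum_eval_pderiv_mul_eq_sum_quadraticCoeff hP hsphere htan hμ)

end SphereEmbedding

open SphereEmbedding

theorem sphere_polynomial_field_embeds_in_quadratic_ODE_general
    (n : ℕ)
    (X : (Fin (n + 1) → ℝ) → Fin (n + 1) → ℝ)
    (hXpoly : ∀ i : Fin (n + 1), ∃ P : MvPolynomial (Fin (n + 1)) ℝ,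
      ∀ x : Fin (n + 1) → ℝ, X x i = MvPolynomial.eval x P)
    (hXtan : ∀ x : Fin (n + 1) → ℝ, (∑ i, x i ^ 2) = 1 → (∑ i, X x i * x i) = 0) :
    ∃ (d : ℕ) (B : Fin d → Fin d → Fin d → ℝ) (Ψ : (Fin (n + 1) → ℝ) → Fin d → ℝ),
      (∀ i j k, B i j k = -B k j i) ∧
      (∀ i : Fin d, ∃ P : MvPolynomial (Fin (n + 1)) ℝ,
        ∀ x : Fin (n + 1) → ℝ, Ψ x i = MvPolynomial.eval x P) ∧
      (∀ x y : Fin (n + 1) → ℝ, (∑ i, x i ^ 2) = 1 → (∑ i, y i ^ 2) = 1 →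
        Ψ x = Ψ y → x = y) ∧
      (∀ x : Fin (n + 1) → ℝ, (∑ i, x i ^ 2) = 1 →
        ∀ v : Fin (n + 1) → ℝ, (∑ i, v i * x i) = 0 →
          fderiv ℝ Ψ x v = 0 → v = 0) ∧
      (∀ γ : ℝ → Fin (n + 1) → ℝ,
        (∀ t : ℝ, (∑ i, γ t i ^ 2) = 1) →
        (∀ t : ℝ, HasDerivAt γ (X (γ t)) t) →
        ∀ (t : ℝ) (i : Fin d),
          HasDerivAt (fun s => Ψ (γ s) i)
            (∑ j, ∑ k, B i j k * Ψ (γ t) j * Ψ (γ t) k) t) := by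
  choose P hP using hXpoly
  obtain rfl : X = fun x i => eval x (P i) := funext fun x => funext fun i => hP i x
  obtain ⟨K, hK, hPK⟩ : ∃ K, 1 ≤ K ∧ ∀ i l, (skewPart P i l).totalDegree ≤ K :=
    ⟨_, le_add_self, totalDegree_skewPart_le P fun i =>
      Nat.succ_le_succ (le_sup (f := fun i => (P i).totalDegree) (mem_univ i))⟩
  let e := (exponentsLE (Fin (n + 1)) K).equivFin
  let Ψ x i := eval x (weightedMonomial (e.symm i).1)
  have hcoord x j : Ψ x (e ⟨single j 1, single_mem_exponentsLE hK j⟩) = x j := by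
    simp [Ψ, eval_weightedMonomial_single]
  refine ⟨_, fun i j k => quadraticCoeff P (e.symm i) (e.symm j) (e.symm k), Ψ,
    fun i j k => quadraticCoeff_antisymm P _ _ _, fun i => ⟨_, fun x => rfl⟩, ?_, ?_, ?_⟩
  · intro x y _ _ hxy
    funext j
    simpa [hcoord] using congrFun hxy (e ⟨_, single_mem_exponentsLE hK j⟩)
  · intro x _ v _ hv
    refine eq_zero_of_fderiv_apply_eq_zero (differentiableAt_pi.2 fun i => ?_) hcoord hv
    exact (AnalyticOnNhd.eval_mvPolynomial _ x trivial).differentiableAt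
  · intro γ hsphere hγ t i
    have hsum (f : (Fin (n + 1) →₀ ℕ) → ℝ) : ∑ ν ∈ exponentsLE _ K, f ν = ∑ j, f (e.symm j) :=
      (sum_coe_sort _ f).symm.trans (e.symm.sum_comp (fun ν => f ν)).symm
    have := hasDerivAt_eval_weightedMonomial_comp hPK (hsphere t) (hXtan _ (hsphere t)) (hγ t)
      (mem_exponentsLE.1 (e.symm i).2)
    simpa only [hsum] using this

/-- sphere case of the key proposition. Every polynomial vector
field `X` on `ℝ^{n+1}` tangent to the unit sphere `𝕊ⁿ` is smoothly conjugate, via a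
polynomial embedding `Ψ` of `𝕊ⁿ` into `ℝ^d`, to the restriction of a homogeneous
quadratic ODE on `ℝ^d` with coefficient tensor `B` satisfying `B_{ijk} = −B_{kji}`. -/
theorem sphere_polynomial_field_embeds_in_quadratic_ODE
    (n : ℕ) (hn : 1 ≤ n)
    (X : (Fin (n + 1) → ℝ) → Fin (n + 1) → ℝ)
    (hXpoly : ∀ i : Fin (n + 1), ∃ P : MvPolynomial (Fin (n + 1)) ℝ,
      ∀ x : Fin (n + 1) → ℝ, X x i = MvPolynomial.eval x P)
    (hXtan : ∀ x : Fin (n + 1) → ℝ, (∑ i, x i ^ 2) = 1 → (∑ i, X x i * x i) = 0) :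
    ∃ (d : ℕ) (B : Fin d → Fin d → Fin d → ℝ) (Ψ : (Fin (n + 1) → ℝ) → Fin d → ℝ),
      (∀ i j k, B i j k = -B k j i) ∧
      (∀ i : Fin d, ∃ P : MvPolynomial (Fin (n + 1)) ℝ,
        ∀ x : Fin (n + 1) → ℝ, Ψ x i = MvPolynomial.eval x P) ∧
      (∀ x y : Fin (n + 1) → ℝ, (∑ i, x i ^ 2) = 1 → (∑ i, y i ^ 2) = 1 →
        Ψ x = Ψ y → x = y) ∧
      (∀ x : Fin (n + 1) → ℝ, (∑ i, x i ^ 2) = 1 →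
        ∀ v : Fin (n + 1) → ℝ, (∑ i, v i * x i) = 0 →
          fderiv ℝ Ψ x v = 0 → v = 0) ∧
      (∀ γ : ℝ → Fin (n + 1) → ℝ,
        (∀ t : ℝ, (∑ i, γ t i ^ 2) = 1) →
        (∀ t : ℝ, HasDerivAt γ (X (γ t)) t) →
        ∀ (t : ℝ) (i : Fin d),
          HasDerivAt (fun s => Ψ (γ s) i)
            (∑ j, ∑ k, B i j k * Ψ (γ t) j * Ψ (γ t) k) t) :=
  sphere_polynomial_field_embeds_in_quadratic_ODE_general n X hXpoly hXtan
end

section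
/- Let m, d ∈ ℕ, let θ : Fin m × Fin d × Fin d → ℝ satisfy θ_{μ,γ,β} = −θ_{μ,β,γ} for all μ, γ, β, and let c : Fin m × Fin d → ℝ satisfy Σ_{μ,α} c_{μ,α} θ_{μ,α,β} = 0 for every β. Define the quadratic vector field V : ℝ^d → ℝ^d by V_β(y) = Σ_{μ,α,γ} θ_{μ,γ,β} c_{μ,α} y_γ y_α. Then the Euclidean divergence of V vanishes identically: Σ_β (∂V_β/∂y_β)(y) = 0 for every y ∈ ℝ^d. -/
/-!
The divergence of the quadratic field `V_β(y) = Σ_{γ,α} A_{βγα} y_γ y_α` is the linear form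
`y ↦ Σ_α (Σ_β (A_{βαβ} + A_{ββα})) y_α`. For `A_{βγα} = Σ_μ θ_{μγβ} c_{μα}` the second trace
vanishes because `θ` is zero on its antisymmetric diagonal, and antisymmetry turns the first into
`-Σ_{μ,β} c_{μβ} θ_{μβα}`, which is zero by the hypothesis on `c`.
-/

open Finset
variable {𝕜 ι : Type*} [NontriviallyNormedField 𝕜] [Fintype ι]

theorem hasFDerivAt_sum_sum_mul_mul (A : ι → ι → 𝕜) (y : ι → 𝕜) :
    HasFDerivAt (fun z : ι → 𝕜 => ∑ γ, ∑ α, A γ α * z γ * z α)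
      (∑ γ, ∑ α, A γ α • (y γ • ContinuousLinearMap.proj (R := 𝕜) (φ := fun _ : ι => 𝕜) α +
        y α • ContinuousLinearMap.proj (R := 𝕜) (φ := fun _ : ι => 𝕜) γ)) y := by
  refine HasFDerivAt.fun_sum fun γ _ => HasFDerivAt.fun_sum fun α _ => ?_
  simp_rw [mul_assoc]
  exact ((hasFDerivAt_apply γ y).mul (hasFDerivAt_apply α y)).const_mul (A γ α)

variable [DecidableEq ι]

theorem fderiv_sum_sum_mul_mul_single (A : ι → ι → 𝕜) (y : ι → 𝕜) (β : ι) :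
    fderiv 𝕜 (fun z : ι → 𝕜 => ∑ γ, ∑ α, A γ α * z γ * z α) y (Pi.single β 1) =
      ∑ α, (A α β + A β α) * y α := by
  rw [(hasFDerivAt_sum_sum_mul_mul A y).fderiv]
  simp [Pi.single_apply, mul_add, sum_add_distrib, mul_comm]

theorem sum_fderiv_sum_sum_mul_mul_single (A : ι → ι → ι → 𝕜) (y : ι → 𝕜) :
    ∑ β, fderiv 𝕜 (fun z : ι → 𝕜 => ∑ γ, ∑ α, A β γ α * z γ * z α) y (Pi.single β 1) =
      ∑ α, (∑ β, (A β α β + A β β α)) * y α := by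
  simp_rw [fderiv_sum_sum_mul_mul_single, sum_mul]
  exact sum_comm

/-- If `θ_{μ,γ,β} = −θ_{μ,β,γ}` and `Σ_{μ,α} c_{μ,α} θ_{μ,α,β} = 0`
for every `β`, then the quadratic vector field
`V_β(y) = Σ_{μ,α,γ} θ_{μ,γ,β} c_{μ,α} y_γ y_α` on `ℝ^d` has identically vanishing
Euclidean divergence. -/
theorem sphere_quadratic_field_divergence_free
    (m d : ℕ)
    (θ : Fin m → Fin d → Fin d → ℝ)
    (hθ : ∀ μ γ β, θ μ γ β = -θ μ β γ)
    (c : Fin m → Fin d → ℝ)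
    (hc : ∀ β : Fin d, (∑ μ, ∑ α, c μ α * θ μ α β) = 0)
    (V : (Fin d → ℝ) → Fin d → ℝ)
    (hV : ∀ (y : Fin d → ℝ) (β : Fin d),
      V y β = ∑ μ, ∑ α, ∑ γ, θ μ γ β * c μ α * y γ * y α) :
    ∀ y : Fin d → ℝ,
      (∑ β, fderiv ℝ (fun z => V z β) y (Pi.single β 1)) = 0 := by
  intro y
  set A : Fin d → Fin d → Fin d → ℝ := fun β γ α => ∑ μ, θ μ γ β * c μ α
  have hVA : ∀ β, (fun z => V z β) = fun z => ∑ γ, ∑ α, A β γ α * z γ * z α := by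
    intro β; ext z
    simp only [hV, A, sum_mul]
    conv_rhs => rw [sum_comm]
    rw [sum_comm]
    exact sum_congr rfl fun _ _ => sum_comm
  have hθ_diag : ∀ μ β, θ μ β β = 0 := fun μ β => by linarith [hθ μ β β]
  have hA : ∀ α, ∑ β, (A β α β + A β β α) = 0 := by
    intro α
    calc ∑ β, (A β α β + A β β α) = -∑ μ, ∑ β, c μ β * θ μ β α := by
          simp only [A, hθ_diag, zero_mul, sum_const_zero, add_zero, ← sum_neg_distrib]
          rw [sum_comm]
          exact sum_congr rfl fun μ _ => sum_congr rfl fun β _ => by rw [hθ]; ring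
      _ = 0 := by rw [hc, neg_zero]
  simp_rw [hVA, sum_fderiv_sum_sum_mul_mul_single, hA, zero_mul, sum_const_zero]
end
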